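/- arXiv:math/9806035 — 5 statements merged into one kernel-verified Lean document; each statement's English description precedes it below -/
import Mathlib

section
/- Let M be an n×n matrix over an integral domain R, and let u = (u_1,...,u_n) be a row vector and w = (w_1,...,w_n)^T a column vector over R such that uM = 0 and Mw = 0. Then for all indices i, j, p, q with u_i, u_p, w_j, w_q all nonzero, one has (-1)^{i+j} det(M(i,j)) / (u_i w_j) = (-1)^{p+q} det(M(p,q)) / (u_p w_q) in the fraction field of R, where M(i,j) denotes the matrix obtained from M by deleting the i-th row and j-th column. -/
open Matrix in
lemma adj_row_prop {R : Type*} [CommRing R] {m : Type*} [DecidableEq m] [Fintype m]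
    (M : Matrix m m R) (u : m → R) (hu : Matrix.vecMul u M = 0) (a b c : m) :
    u b * Matrix.adjugate M a c = u c * Matrix.adjugate M a b := by
  rcases eq_or_ne b c with rfl | hbc
  · rfl
  have hsum : ∑ r, u r • M r = 0 := by
    funext j
    simpa [Matrix.vecMul, dotProduct, Finset.sum_apply] using congrFun hu j
  have hsplit : u b • M b = (-(u c)) • M c +
      ∑ r ∈ (Finset.univ.erase b).erase c, (-(u r)) • M r := by
    have h1 : u b • M b + ∑ r ∈ Finset.univ.erase b, u r • M r = 0 :=
      (Finset.add_sum_erase _ (fun r => u r • M r) (Finset.mem_univ b)).trans hsum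
    have h2 : ∑ r ∈ Finset.univ.erase b, u r • M r
        = u c • M c + ∑ r ∈ (Finset.univ.erase b).erase c, u r • M r :=
      (Finset.add_sum_erase _ (fun r => u r • M r)
        (Finset.mem_erase.mpr ⟨Ne.symm hbc, Finset.mem_univ c⟩)).symm
    have h3 := eq_neg_of_add_eq_zero_left h1
    rw [h3, h2, neg_add]
    simp only [neg_smul, ← Finset.sum_neg_distrib]
  set e : m → R := Pi.single a 1 with he
  set N : Matrix m m R := M.updateRow c e with hN
  have hNb : N b = M b := Matrix.updateRow_ne hbc
  have key : u b * N.det = -(u c) * (N.updateRow b (M c)).det := by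
    calc u b * N.det = (N.updateRow b (u b • M b)).det := by
          rw [Matrix.det_updateRow_smul, ← hNb, Matrix.updateRow_eq_self]
      _ = (N.updateRow b ((-(u c)) • M c)).det +
            (N.updateRow b (∑ r ∈ (Finset.univ.erase b).erase c, (-(u r)) • M r)).det := by
          rw [← Matrix.det_updateRow_add, ← hsplit]
      _ = -(u c) * (N.updateRow b (M c)).det := by
          have hz : (N.updateRow b (∑ r ∈ (Finset.univ.erase b).erase c,
              (-(u r)) • M r)).det = 0 := by
            have hb : b ∉ (Finset.univ.erase b).erase c :=
              fun h => (Finset.mem_erase.mp (Finset.mem_erase.mp h).2).1 rfl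
            have hrows : ∑ r ∈ (Finset.univ.erase b).erase c, (-(u r)) • M r
                = ∑ r ∈ (Finset.univ.erase b).erase c, (-(u r)) • N r := by
              refine Finset.sum_congr rfl fun r hr => ?_
              rw [hN, Matrix.updateRow_ne (Finset.mem_erase.mp hr).1]
            have := Matrix.det_updateRow_sum_aux N ((Finset.univ.erase b).erase c) hb
              (fun r => -(u r)) 0
            rw [zero_smul, zero_add] at this
            rw [hrows, this, zero_smul]
          rw [hz, add_zero, Matrix.det_updateRow_smul]
  -- swap rows b and c
  have hswap : (N.updateRow b (M c)).det = - (M.updateRow b e).det := by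
    have hXY : N.updateRow b (M c) = (M.updateRow b e).submatrix (Equiv.swap b c) id := by
      ext r s
      rcases eq_or_ne r b with rfl | hrb
      · simp [Matrix.updateRow_self, Equiv.swap_apply_left, Matrix.updateRow_ne hbc.symm]
      rcases eq_or_ne r c with rfl | hrc
      · simp [hN, Matrix.updateRow_ne hrb, Matrix.updateRow_self, Equiv.swap_apply_right,
          Matrix.updateRow_self]
      · simp [hN, Matrix.updateRow_ne hrb, Matrix.updateRow_ne hrc,
          Equiv.swap_apply_of_ne_of_ne hrb hrc]
    rw [hXY, Matrix.det_permute, Equiv.Perm.sign_swap hbc]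
    simp
  rw [Matrix.adjugate_apply, Matrix.adjugate_apply, ← hN, key, hswap]
  ring

lemma adj_col_prop {R : Type*} [CommRing R] {m : Type*} [DecidableEq m] [Fintype m]
    (M : Matrix m m R) (w : m → R) (hw : Matrix.mulVec M w = 0) (a b c : m) :
    w b * Matrix.adjugate M c a = w c * Matrix.adjugate M b a := by
  have hu : Matrix.vecMul w M.transpose = 0 := by
    rw [Matrix.vecMul_transpose, hw]
  have := adj_row_prop M.transpose w hu a b c
  rwa [← Matrix.adjugate_transpose, Matrix.transpose_apply, Matrix.transpose_apply] at this

/-- For an n×n matrix M over an integral domain R with uM = 0 and Mw = 0,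
the quantity (-1)^(i+j) det(M(i,j)) / (u_i w_j) in the fraction field is independent of
the choice of indices i, j with u_i ≠ 0 and w_j ≠ 0. -/
theorem stmt0 {R : Type*} [CommRing R] [IsDomain R] {n : ℕ}
    (M : Matrix (Fin (n + 1)) (Fin (n + 1)) R) (u w : Fin (n + 1) → R)
    (hu : Matrix.vecMul u M = 0) (hw : Matrix.mulVec M w = 0)
    (i j p q : Fin (n + 1))
    (hui : u i ≠ 0) (hup : u p ≠ 0) (hwj : w j ≠ 0) (hwq : w q ≠ 0) :
    ((-1 : FractionRing R) ^ ((i : ℕ) + (j : ℕ)) *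
        algebraMap R (FractionRing R) ((M.submatrix i.succAbove j.succAbove).det)) /
      (algebraMap R (FractionRing R) (u i) * algebraMap R (FractionRing R) (w j)) =
    ((-1 : FractionRing R) ^ ((p : ℕ) + (q : ℕ)) *
        algebraMap R (FractionRing R) ((M.submatrix p.succAbove q.succAbove).det)) /
      (algebraMap R (FractionRing R) (u p) * algebraMap R (FractionRing R) (w q)) := by
  have hinj : Function.Injective (algebraMap R (FractionRing R)) :=
    IsFractionRing.injective R (FractionRing R)
  have key : Matrix.adjugate M j i * (u p * w q) = Matrix.adjugate M q p * (u i * w j) := by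
    have h1 : u p * Matrix.adjugate M j i = u i * Matrix.adjugate M j p :=
      adj_row_prop M u hu j p i
    have h2 : w q * Matrix.adjugate M j p = w j * Matrix.adjugate M q p :=
      adj_col_prop M w hw p q j
    calc Matrix.adjugate M j i * (u p * w q)
        = (u p * Matrix.adjugate M j i) * w q := by ring
      _ = (u i * Matrix.adjugate M j p) * w q := by rw [h1]
      _ = u i * (w q * Matrix.adjugate M j p) := by ring
      _ = u i * (w j * Matrix.adjugate M q p) := by rw [h2]
      _ = Matrix.adjugate M q p * (u i * w j) := by ring
  have hd1 : algebraMap R (FractionRing R) (u i) * algebraMap R (FractionRing R) (w j) ≠ 0 :=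
    mul_ne_zero (fun h => hui (hinj (by simpa using h))) (fun h => hwj (hinj (by simpa using h)))
  have hd2 : algebraMap R (FractionRing R) (u p) * algebraMap R (FractionRing R) (w q) ≠ 0 :=
    mul_ne_zero (fun h => hup (hinj (by simpa using h))) (fun h => hwq (hinj (by simpa using h)))
  have hadj : ∀ a b : Fin (n + 1),
      ((-1 : FractionRing R) ^ ((a : ℕ) + (b : ℕ)) *
        algebraMap R (FractionRing R) ((M.submatrix a.succAbove b.succAbove).det))
      = algebraMap R (FractionRing R) (Matrix.adjugate M b a) := by
    intro a b
    rw [Matrix.adjugate_fin_succ_eq_det_submatrix, map_mul]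
    simp
  rw [hadj, hadj, div_eq_div_iff hd1 hd2, ← map_mul, ← map_mul, ← map_mul, ← map_mul]
  exact congrArg _ key
end

section
/- Let F be a field, γ ∈ M_n(F), and suppose there are vectors u (row) and w (column) with u(I−γ) = 0, (I−γ)w = 0, w_1 ≠ 0, u_1 ≠ 0, and u·w ≠ 0. Let γ̃ denote the (n−1)×(n−1) matrix representing the induced map on F^n/(F·w) in the basis given by the images of e_2,...,e_n, and for a matrix M let M(1,1) denote the minor obtained by deleting the first row and first column. Then (−1)^{1+1} det((I−γ)(1,1))/(u_1 w_1) · (u·w) = det(I − γ̃). -/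
/-- Let γ be an (n+1)×(n+1) matrix over a field F with u(I−γ) = 0,
(I−γ)w = 0, w_1 ≠ 0, u_1 ≠ 0, u·w ≠ 0, and let γ̃ be the matrix of the induced map on
F^{n+1}/(F·w) in the basis of images of e_2,…,e_{n+1}.  Then
det((I−γ)(1,1))/(u_1 w_1) · (u·w) = det(I − γ̃). -/
theorem stmt11 {F : Type*} [Field F] {n : ℕ}
    (γ : Matrix (Fin (n + 1)) (Fin (n + 1)) F)
    (u w : Fin (n + 1) → F)
    (hu : Matrix.vecMul u (1 - γ) = 0)
    (hw : Matrix.mulVec (1 - γ) w = 0)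
    (hw1 : w 0 ≠ 0) (hu1 : u 0 ≠ 0)
    (huw : dotProduct u w ≠ 0)
    (γt : Matrix (Fin n) (Fin n) F)
    (hred : ∀ j : Fin n, ∃ c : F, ∀ i : Fin (n + 1),
      γ i j.succ = c * w i + ∑ k : Fin n, γt k j * (if i = k.succ then (1 : F) else 0)) :
    Matrix.det ((1 - γ).submatrix Fin.succ Fin.succ) / (u 0 * w 0) * dotProduct u w
      = Matrix.det (1 - γt) := by
  classical
  set M : Matrix (Fin (n+1)) (Fin (n+1)) F := 1 - γ with hM
  -- formula for γt
  have hγt : ∀ i j : Fin n, γt i j = γ i.succ j.succ - γ 0 j.succ / w 0 * w i.succ := by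
    intro i j
    obtain ⟨c, hc⟩ := hred j
    have h0 := hc 0
    have hi := hc i.succ
    have hs0 : (∑ k : Fin n, γt k j * (if (0 : Fin (n+1)) = k.succ then (1:F) else 0)) = 0 := by
      apply Finset.sum_eq_zero
      intro k _
      rw [if_neg (fun h => (Fin.succ_ne_zero k) h.symm), mul_zero]
    have hsi : (∑ k : Fin n, γt k j * (if i.succ = k.succ then (1:F) else 0)) = γt i j := by
      rw [Finset.sum_eq_single i (fun b _ hb => by
          rw [if_neg (fun h => hb (Fin.succ_injective _ h.symm)), mul_zero])
        (fun h => absurd (Finset.mem_univ i) h)]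
      rw [if_pos rfl, mul_one]
    rw [hs0, add_zero] at h0
    rw [hsi] at hi
    have hcval : c = γ 0 j.succ / w 0 := by rw [h0]; field_simp
    rw [hi, hcval]; ring
  set P : Matrix (Fin (n+1)) (Fin (n+1)) F := M.updateCol 0 w with hP
  have hPcol : ∀ i, P i 0 = w i := by intro i; simp [hP]
  have hPoth : ∀ i (j : Fin n), P i j.succ = M i j.succ := by
    intro i j; simp [hP, Matrix.updateCol_apply, (Fin.succ_ne_zero j)]
  -- lower triangular factor
  set K : Matrix (Fin (n+1)) (Fin (n+1)) F :=
    Matrix.of (fun i j => if j = 0 ∧ i ≠ 0 then w i / w 0 else 0) with hK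
  set Q : Matrix (Fin (n+1)) (Fin (n+1)) F := (1 - K) * P with hQ
  have hQentry : ∀ i j, Q i j = P i j - (if i = 0 then 0 else w i / w 0 * P 0 j) := by
    intro i j
    rw [hQ, Matrix.sub_mul, Matrix.one_mul, Matrix.sub_apply, Matrix.mul_apply]
    congr 1
    by_cases hi : i = 0
    · subst hi
      simp [hK]
    · rw [if_neg hi]
      rw [Finset.sum_eq_single 0 (fun b _ hb => by simp [hK, hb]) (by simp)]
      simp [hK, hi]
  have hQ00 : Q 0 0 = w 0 := by rw [hQentry]; simp [hPcol]
  have hQcol : ∀ i : Fin n, Q i.succ 0 = 0 := by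
    intro i
    rw [hQentry, if_neg (Fin.succ_ne_zero i), hPcol, hPcol]
    field_simp
    ring
  have hQsub : Q.submatrix Fin.succ Fin.succ = 1 - γt := by
    ext i j
    rw [Matrix.submatrix_apply, hQentry, if_neg (Fin.succ_ne_zero i), hPoth, hPoth]
    have e1 : M i.succ j.succ = (if i = j then (1:F) else 0) - γ i.succ j.succ := by
      rw [hM]; simp [Matrix.sub_apply, Matrix.one_apply, Fin.succ_inj]
    have e2 : M 0 j.succ = - γ 0 j.succ := by
      rw [hM]; simp [Matrix.sub_apply, Matrix.one_apply, (Fin.succ_ne_zero j).symm]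
    rw [e1, e2, Matrix.sub_apply, hγt, Matrix.one_apply]
    by_cases h : i = j <;> simp only [h, if_pos, if_neg, if_true] <;> ring
  -- det (1 - K) = 1
  have hdetK : (1 - K).det = 1 := by
    rw [Matrix.det_succ_row_zero, Fin.sum_univ_succ]
    have hrow : ∀ j : Fin n, (1 - K) 0 j.succ = 0 := by
      intro j
      simp [hK, Matrix.one_apply, (Fin.succ_ne_zero j).symm]
    have h00 : (1 - K) 0 0 = 1 := by simp [hK]
    have hsub : (1 - K).submatrix Fin.succ (Fin.succAbove 0) = 1 := by
      ext i j
      simp [Fin.succAbove_zero, hK, Matrix.one_apply, Fin.succ_inj, (Fin.succ_ne_zero j)]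
    rw [h00, hsub]
    simp [hrow]
  -- upper triangular factor
  set K' : Matrix (Fin (n+1)) (Fin (n+1)) F :=
    Matrix.of (fun i j => if i = 0 ∧ j ≠ 0 then u j / u 0 else 0) with hK'
  set R : Matrix (Fin (n+1)) (Fin (n+1)) F := (1 + K') * P with hR
  have hRentry : ∀ i j, R i j = P i j + (if i = 0 then ∑ k : Fin n, u k.succ / u 0 * P k.succ j else 0) := by
    intro i j
    rw [hR, Matrix.add_mul, Matrix.one_mul, Matrix.add_apply, Matrix.mul_apply]
    congr 1
    by_cases hi : i = 0
    · subst hi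
      rw [if_pos rfl, Fin.sum_univ_succ]
      simp [hK', Fin.succ_ne_zero]
    · rw [if_neg hi]
      apply Finset.sum_eq_zero
      intro b _
      simp [hK', hi]
  have hdetK' : (1 + K').det = 1 := by
    rw [Matrix.det_succ_column_zero, Fin.sum_univ_succ]
    have hcol : ∀ i : Fin n, (1 + K') i.succ 0 = 0 := by
      intro i
      simp [hK', Matrix.one_apply, Fin.succ_ne_zero i]
    have h00 : (1 + K') 0 0 = 1 := by simp [hK']
    have hsub : (1 + K').submatrix (Fin.succAbove 0) Fin.succ = 1 := by
      ext i j
      simp [Fin.succAbove_zero, hK', Matrix.one_apply, Fin.succ_inj, Fin.succ_ne_zero i]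
    rw [h00, hsub]
    simp [hcol]
  -- first row of R
  have hR00 : u 0 * R 0 0 = dotProduct u w := by
    rw [hRentry, if_pos rfl, hPcol]
    have : ∀ k : Fin n, P k.succ (0 : Fin (n+1)) = w k.succ := fun k => hPcol _
    simp only [this]
    rw [dotProduct, Fin.sum_univ_succ, mul_add, Finset.mul_sum]
    congr 1
    apply Finset.sum_congr rfl
    intro k _
    field_simp
  have hRrow : ∀ j : Fin n, R 0 j.succ = 0 := by
    intro j
    rw [hRentry, if_pos rfl, hPoth]
    have hvm := congrFun hu j.succ
    rw [Matrix.vecMul, Pi.zero_apply, dotProduct, Fin.sum_univ_succ] at hvm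
    have : ∀ k : Fin n, P k.succ j.succ = M k.succ j.succ := fun k => hPoth _ _
    simp only [this]
    have hsum : ∑ k : Fin n, u k.succ / u 0 * M k.succ j.succ
        = (∑ k : Fin n, u k.succ * M k.succ j.succ) / u 0 := by
      rw [Finset.sum_div]
      apply Finset.sum_congr rfl
      intro k _
      ring
    rw [hsum]
    have h2 : (∑ k : Fin n, u k.succ * M k.succ j.succ) = - (u 0 * M 0 j.succ) := by
      linear_combination hvm
    rw [h2]
    field_simp
    ring
  have hRsub : R.submatrix Fin.succ Fin.succ = M.submatrix Fin.succ Fin.succ := by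
    ext i j
    rw [Matrix.submatrix_apply, Matrix.submatrix_apply, hRentry,
      if_neg (Fin.succ_ne_zero i), add_zero, hPoth]
  -- compute det Q two ways
  have hdetQ1 : Q.det = P.det := by rw [hQ, Matrix.det_mul, hdetK, one_mul]
  have hdetQ2 : Q.det = w 0 * (1 - γt).det := by
    rw [Matrix.det_succ_column_zero, Fin.sum_univ_succ]
    have : ∀ i : Fin n, ((-1 : F)) ^ ((i.succ : Fin (n+1)) : ℕ) * Q i.succ 0
        * (Q.submatrix (Fin.succAbove i.succ) Fin.succ).det = 0 := by
      intro i; rw [hQcol, mul_zero, zero_mul]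
    rw [Finset.sum_eq_zero (fun i _ => this i), add_zero, hQ00, Fin.succAbove_zero, hQsub]
    simp
  have hdetR1 : R.det = P.det := by rw [hR, Matrix.det_mul, hdetK', one_mul]
  have hdetR2 : R.det = R 0 0 * (M.submatrix Fin.succ Fin.succ).det := by
    rw [Matrix.det_succ_row_zero, Fin.sum_univ_succ]
    have : ∀ j : Fin n, ((-1 : F)) ^ ((j.succ : Fin (n+1)) : ℕ) * R 0 j.succ
        * (R.submatrix Fin.succ (Fin.succAbove j.succ)).det = 0 := by
      intro j; rw [hRrow, mul_zero, zero_mul]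
    rw [Finset.sum_eq_zero (fun j _ => this j), add_zero, Fin.succAbove_zero, hRsub]
    simp [hR]
  -- conclude
  have key : u 0 * (w 0 * (1 - γt).det) = dotProduct u w * (M.submatrix Fin.succ Fin.succ).det := by
    rw [← hdetQ2, hdetQ1, ← hdetR1, hdetR2, ← hR00]
    ring
  rw [hM] at key
  rw [div_mul_eq_mul_div, div_eq_iff (mul_ne_zero hu1 hw1)]
  linear_combination -key
end

section
/- Let f be the map on formal power series in z given by f(a) = a + z(1−a)^2/(1−za). Suppose a = 1 + a_N z^N + (higher order terms) with N ≥ 1 and a_N ≠ 0, over a field of characteristic zero. Then f(a) − a = a_N^2 z^{2N+1} + O(z^{2N+2}), and for each k ≥ 0 the coefficient of z^{2N+1} in f^k(a) equals a_{2N+1} + k·a_N^2, where a_{2N+1} is the corresponding coefficient of a. Hence the iterates f^k(a) are pairwise distinct. -/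
/-!
Write `1 - a = z^N c`. Then `f(a) - a = z^{2N+1} c² (1 - za)⁻¹`, so one step of `f` changes no
coefficient below `z^{2N+1}` (in particular `1 - f(a)` is again divisible by `z^N`, with the same
`z^N`-coefficient) and adds `c(0)² = a_N²` to the coefficient of `z^{2N+1}`. Iterating, that
coefficient grows by `a_N² ≠ 0` at each step, which in characteristic zero separates the iterates.
-/

namespace PowerSeries

variable {R : Type*} [CommRing R]

noncomputable def parabolicMap (x : R⟦X⟧) : R⟦X⟧ :=
  x + X * (1 - x) ^ 2 * Ring.inverse (1 - X * x)

theorem constantCoeff_inverse_one_sub_X_mul (x : R⟦X⟧) :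
    constantCoeff (Ring.inverse (1 - X * x)) = 1 := by
  have hunit : IsUnit (1 - X * x) := isUnit_iff_constantCoeff.mpr (by simp)
  simpa using congrArg constantCoeff (Ring.mul_inverse_cancel _ hunit)

variable {N : ℕ} {x : R⟦X⟧}

theorem exists_parabolicMap_sub_eq_X_pow_mul (hx : X ^ N ∣ 1 - x) :
    ∃ g : R⟦X⟧, parabolicMap x - x = X ^ (2 * N + 1) * g ∧
      constantCoeff g = coeff N (1 - x) ^ 2 := by
  obtain ⟨c, hc⟩ := hx
  refine ⟨c ^ 2 * Ring.inverse (1 - X * x), ?_, ?_⟩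
  · rw [parabolicMap, hc]
    ring
  · simp [constantCoeff_inverse_one_sub_X_mul, hc, coeff_X_pow_mul']

theorem coeff_parabolicMap_of_lt (hx : X ^ N ∣ 1 - x) {j : ℕ} (hj : j < 2 * N + 1) :
    coeff j (parabolicMap x) = coeff j x := by
  obtain ⟨g, hg, -⟩ := exists_parabolicMap_sub_eq_X_pow_mul hx
  rw [← sub_eq_zero, ← map_sub, hg, coeff_X_pow_mul', if_neg (by omega)]

theorem coeff_parabolicMap_two_mul_add_one (hx : X ^ N ∣ 1 - x) :
    coeff (2 * N + 1) (parabolicMap x) = coeff (2 * N + 1) x + coeff N (1 - x) ^ 2 := by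
  obtain ⟨g, hg, hg0⟩ := exists_parabolicMap_sub_eq_X_pow_mul hx
  rw [← sub_eq_iff_eq_add', ← map_sub, hg, coeff_X_pow_mul', if_pos le_rfl, Nat.sub_self,
    coeff_zero_eq_constantCoeff, hg0]

theorem X_pow_dvd_one_sub_parabolicMap (hx : X ^ N ∣ 1 - x) :
    X ^ N ∣ 1 - parabolicMap x := by
  rw [X_pow_dvd_iff] at hx ⊢
  intro m hm
  rw [map_sub, coeff_parabolicMap_of_lt (X_pow_dvd_iff.mpr hx) (by omega), ← map_sub]
  exact hx m hm

theorem X_pow_dvd_one_sub_parabolicMap_iterate (hx : X ^ N ∣ 1 - x) (m : ℕ) :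
    X ^ N ∣ 1 - parabolicMap^[m] x := by
  induction m with
  | zero => exact hx
  | succ m ih =>
    rw [Function.iterate_succ_apply']
    exact X_pow_dvd_one_sub_parabolicMap ih

theorem coeff_parabolicMap_iterate_of_lt (hx : X ^ N ∣ 1 - x) {j : ℕ} (hj : j < 2 * N + 1)
    (m : ℕ) : coeff j (parabolicMap^[m] x) = coeff j x := by
  induction m with
  | zero => rfl
  | succ m ih =>
    rw [Function.iterate_succ_apply',
      coeff_parabolicMap_of_lt (X_pow_dvd_one_sub_parabolicMap_iterate hx m) hj, ih]

theorem coeff_parabolicMap_iterate_two_mul_add_one (hx : X ^ N ∣ 1 - x) (m : ℕ) :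
    coeff (2 * N + 1) (parabolicMap^[m] x)
      = coeff (2 * N + 1) x + m * coeff N (1 - x) ^ 2 := by
  induction m with
  | zero => simp
  | succ m ih =>
    have hN : coeff N (1 - parabolicMap^[m] x) = coeff N (1 - x) := by
      simp only [map_sub, coeff_parabolicMap_iterate_of_lt hx (by omega : N < 2 * N + 1)]
    rw [Function.iterate_succ_apply',
      coeff_parabolicMap_two_mul_add_one (X_pow_dvd_one_sub_parabolicMap_iterate hx m), ih, hN]
    push_cast
    ring

end PowerSeries

open PowerSeries

/-- Let f(a) = a + z(1−a)²/(1−za) on K⟦z⟧ (char K = 0) and let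
a = 1 + a_N z^N + … with N ≥ 1 and a_N ≠ 0.  Then f(a) − a = a_N² z^{2N+1} + O(z^{2N+2}),
the coefficient of z^{2N+1} in f^[k](a) equals a_{2N+1} + k·a_N², and the iterates
f^[k](a) are pairwise distinct. -/
theorem stmt14 {K : Type*} [Field K] [CharZero K]
    (f : PowerSeries K → PowerSeries K)
    (hf : ∀ x, f x = x + PowerSeries.X * (1 - x) ^ 2 * Ring.inverse (1 - PowerSeries.X * x))
    (a : PowerSeries K) (N : ℕ) (hN1 : 1 ≤ N)
    (h0 : PowerSeries.constantCoeff a = 1)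
    (hN : PowerSeries.coeff N a ≠ 0)
    (hlow : ∀ i, 0 < i → i < N → PowerSeries.coeff i a = 0) :
    (∀ j < 2 * N + 1, PowerSeries.coeff j (f a - a) = 0) ∧
    PowerSeries.coeff (2 * N + 1) (f a - a) = (PowerSeries.coeff N a) ^ 2 ∧
    (∀ m : ℕ, PowerSeries.coeff (2 * N + 1) (f^[m] a)
      = PowerSeries.coeff (2 * N + 1) a + (m : K) * (PowerSeries.coeff N a) ^ 2) ∧
    (∀ m l : ℕ, f^[m] a = f^[l] a → m = l) := by
  obtain rfl : f = parabolicMap := funext hf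
  have ha : X ^ N ∣ 1 - a := X_pow_dvd_iff.mpr fun i hi => by
    rcases Nat.eq_zero_or_pos i with rfl | hi0
    · simp [h0]
    · simp [coeff_one, hi0.ne', hlow i hi0 hi]
  have haN : coeff N (1 - a) ^ 2 = coeff N a ^ 2 := by
    simp [coeff_one, show N ≠ 0 by omega]
  have hiter := coeff_parabolicMap_iterate_two_mul_add_one ha
  rw [haN] at hiter
  refine ⟨fun j hj => ?_, ?_, hiter, fun m l hml => ?_⟩
  · rw [map_sub, coeff_parabolicMap_of_lt ha hj, sub_self]
  · rw [map_sub, coeff_parabolicMap_two_mul_add_one ha, haN, add_sub_cancel_left]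
  · simpa [hiter, hN] using congrArg (coeff (2 * N + 1)) hml
end

section
/- Over the field F = ℚ(t_1,...,t_n), consider the acyclic complex D_*: 0 → F →^W F^n →^M F^n →^q F → 0 where M = I − γ with γw = w, uγ = u, W(f) = fw, q(v) = Σ u_i v_i, u_i = (t_1⋯t_i)^{-1}, w_i = 1 − t_i, and assume rank(M) = n−1. Then the torsion of D_* equals u_1 w_1 / det(M(1,1)) = (t_1^{-1}(1 − t_1)) / det((I−γ)(1,1)), i.e. τ(D_*) is the reciprocal of the Alexander function Δ = (t_1) det((I−γ)(1,1))/(1−t_1) up to units. -/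
/-!
Take as bases of the boundaries `u₁` (level 0), the columns `2, …, n + 1` of `M = I − γ`
(level 1) and `w` (level 2), lifted to `e₁`, `e₂, …, e_{n+1}` and `1`. The base-change
determinants are then `u₁`, `det M(1,1)` (Laplace expansion along the column `e₁`) and `w₁`,
which gives the torsion `u₁ w₁ / det M(1,1)` as soon as `det M(1,1) ≠ 0`.

For that, let `A` be `M` with its first column replaced by `e₁`, and `A v = 0`. As `u M = 0`,
`u A = u₁ e₁ᵀ`, so `u₁ v₁ = u (A v) = 0` and `v₁ = 0`. Then `M v = A v = 0`; since `M` has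
rank `n`, its kernel is `F w`, and `w₁ ≠ 0` forces `v = 0`.
-/

/-- `IsTorsionOf N r d τ` says that τ is a Reidemeister torsion of the based acyclic
chain complex over the field F with chain modules C_i = F^{r i} (standard bases) and
differentials d i : C_{i+1} → C_i given by matrices, supported in levels 0,…,N.
Following Milnor: there are families B i in C_i (bases of the boundaries) with lifts
Bt i in C_{i+1} (so d i (Bt i k) = B i k) such that at each level the combined family
(B_i, Bt_{i-1}) is a basis of C_i, and τ is the alternating product of the determinants
of the corresponding base-change matrices [B_i Bt_{i-1} | e_i] (indices matched by some
bijections, which accounts for the usual ± ambiguity). -/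
def IsTorsionOf {F : Type*} [Field F] (N : ℕ) (r : ℕ → ℕ)
    (d : ∀ i : ℕ, Matrix (Fin (r i)) (Fin (r (i + 1))) F) (τ : F) : Prop :=
  ∃ (b : ℕ → ℕ)
    (B : ∀ i, Fin (b i) → Fin (r i) → F)
    (Bt : ∀ i, Fin (b i) → Fin (r (i + 1)) → F)
    (e : ∀ i, Fin (r (i + 1)) ≃ (Fin (b (i + 1)) ⊕ Fin (b i)))
    (e0 : Fin (r 0) ≃ Fin (b 0)),
    (∀ i k, Matrix.mulVec (d i) (Bt i k) = B i k) ∧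
    (let detAt : ℕ → F := fun i =>
      Nat.rec (motive := fun _ => F)
        (Matrix.det (Matrix.of fun (p q : Fin (r 0)) => B 0 (e0 q) p))
        (fun j _ => Matrix.det (Matrix.of fun (p q : Fin (r (j + 1))) =>
          Sum.elim (fun k => B (j + 1) k p) (fun k => Bt j k p) (e j q))) i
    (∀ i, IsUnit (detAt i)) ∧
      τ * ∏ i ∈ Finset.range (N + 1), (if Odd i then detAt i else 1)
        = ∏ i ∈ Finset.range (N + 1), (if Even i then detAt i else 1))

/-- Dimensions of the complex 0 → F → F^{n+1} → F^{n+1} → F → 0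
(levels 3, 2, 1, 0). -/
def stmtR (n : ℕ) : ℕ → ℕ
  | 0 => 1
  | 1 => n + 1
  | 2 => n + 1
  | 3 => 1
  | _ + 4 => 0

/-- Differentials of the complex 0 → F →^W F^{n+1} →^{I−γ} F^{n+1} →^q F → 0, where
W(f) = f·w and q(v) = Σ u_i v_i. -/
def stmtD {F : Type*} [Field F] {n : ℕ}
    (γ : Matrix (Fin (n + 1)) (Fin (n + 1)) F) (u w : Fin (n + 1) → F) :
    ∀ i : ℕ, Matrix (Fin (stmtR n i)) (Fin (stmtR n (i + 1))) F
  | 0 => Matrix.of fun _ j => u j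
  | 1 => (1 : Matrix (Fin (n + 1)) (Fin (n + 1)) F) - γ
  | 2 => Matrix.of fun i _ => w i
  | _ + 3 => 0

open Matrix

theorem algebraMap_X_ne_zero {σ R K : Type*} [CommRing R] [Nontrivial R] [CommRing K]
    [Algebra (MvPolynomial σ R) K] [IsFractionRing (MvPolynomial σ R) K] (i : σ) :
    algebraMap (MvPolynomial σ R) K (MvPolynomial.X i) ≠ 0 :=
  (map_ne_zero_iff _ (IsFractionRing.injective _ K)).mpr (MvPolynomial.X_ne_zero i)

theorem algebraMap_X_ne_one {σ R K : Type*} [CommRing R] [Nontrivial R] [CommRing K]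
    [Algebra (MvPolynomial σ R) K] [IsFractionRing (MvPolynomial σ R) K] (i : σ) :
    algebraMap (MvPolynomial σ R) K (MvPolynomial.X i) ≠ 1 := by
  rw [← map_one (algebraMap (MvPolynomial σ R) K), (IsFractionRing.injective _ K).ne_iff]
  intro h
  simpa using congrArg MvPolynomial.constantCoeff h

namespace Matrix

variable {K : Type*} [Field K]

theorem exists_smul_eq_of_mulVec_eq_zero {m ι : Type*} [Fintype m] [Fintype ι]
    {M : Matrix m ι K} (hM : M.rank + 1 = Fintype.card ι) {w v : ι → K} (hw : M *ᵥ w = 0)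
    (hw0 : w ≠ 0) (hv : M *ᵥ v = 0) : ∃ c : K, c • w = v := by
  have hker : Module.finrank K (LinearMap.ker M.mulVecLin) = 1 := by
    have := LinearMap.finrank_range_add_finrank_ker M.mulVecLin
    rw [Module.finrank_fintype_fun_eq_card] at this
    rw [Matrix.rank] at hM
    omega
  obtain ⟨c, hc⟩ := (finrank_eq_one_iff_of_nonzero' (⟨w, hw⟩ : LinearMap.ker M.mulVecLin)
    fun h => hw0 (congrArg Subtype.val h)).mp hker ⟨v, hv⟩
  exact ⟨c, congrArg Subtype.val hc⟩

theorem det_one_updateCol {ι : Type*} [Fintype ι] [DecidableEq ι] (i : ι) (v : ι → K) :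
    ((1 : Matrix ι ι K).updateCol i v).det = v i := by
  rw [← cramer_apply, cramer_one]
  rfl

theorem det_updateCol_zero_single {n : ℕ} (M : Matrix (Fin (n + 1)) (Fin (n + 1)) K) :
    (M.updateCol 0 (Pi.single 0 1)).det = (M.submatrix Fin.succ Fin.succ).det := by
  rw [← cramer_apply, cramer_eq_adjugate_mulVec, mulVec_single_one, col_apply,
    adjugate_fin_succ_eq_det_submatrix]
  simp

theorem det_submatrix_succ_succ_ne_zero {n : ℕ} {M : Matrix (Fin (n + 1)) (Fin (n + 1)) K}
    (hM : M.rank = n) {u w : Fin (n + 1) → K} (hw : M *ᵥ w = 0) (hu : u ᵥ* M = 0)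
    (hu0 : u 0 ≠ 0) (hw0 : w 0 ≠ 0) : (M.submatrix Fin.succ Fin.succ).det ≠ 0 := by
  rw [← det_updateCol_zero_single]
  intro hdet
  obtain ⟨v, hv_ne, hv⟩ := exists_mulVec_eq_zero_iff.mpr hdet
  have huA : u ᵥ* M.updateCol 0 (Pi.single 0 1) = Pi.single 0 (u 0) := by
    rw [vecMul_updateCol, hu, dotProduct_single, mul_one]
    rfl
  have hv_zero : v 0 = 0 := by
    have := congrArg (u ⬝ᵥ ·) hv
    simp only [dotProduct_mulVec, huA, single_dotProduct, dotProduct_zero] at this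
    exact (mul_eq_zero.mp this).resolve_left hu0
  have hMv : M *ᵥ v = 0 := by
    rw [← hv]
    ext p
    simp [mulVec, dotProduct, Fin.sum_univ_succ, hv_zero]
  obtain ⟨c, rfl⟩ := exists_smul_eq_of_mulVec_eq_zero (by simp [hM]) hw
    (fun h => hw0 (congrFun h 0)) hMv
  have hc : c = 0 := by simpa [hw0] using hv_zero
  exact hv_ne (by simp [hc])

end Matrix

section Torsion

variable {K : Type*} [Field K] {n : ℕ}

def boundaryRank (n : ℕ) : ℕ → ℕ
  | 0 => 1
  | 1 => n
  | 2 => 1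
  | _ + 3 => 0

def boundaryBasis (γ : Matrix (Fin (n + 1)) (Fin (n + 1)) K) (u w : Fin (n + 1) → K) :
    ∀ i, Fin (boundaryRank n i) → Fin (stmtR n i) → K
  | 0 => fun _ _ => u 0
  | 1 => fun k => (1 - γ).col k.succ
  | 2 => fun _ => w
  | _ + 3 => fun k => k.elim0

def boundaryLift : ∀ i, Fin (boundaryRank n i) → Fin (stmtR n (i + 1)) → K
  | 0 => fun _ => Pi.single (0 : Fin (n + 1)) 1
  | 1 => fun k => Pi.single k.succ 1
  | 2 => fun _ _ => 1
  | _ + 3 => fun k => k.elim0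

def finSuccEquivSum (n : ℕ) : Fin (n + 1) ≃ Fin n ⊕ Fin 1 :=
  (finSuccEquiv n).trans <| (Equiv.optionEquivSumPUnit _).trans <|
    Equiv.sumCongr (Equiv.refl _) finOneEquiv.symm

/-- Puts the lift `Pi.single 0 1` (level 1) and the boundary `w` (level 2) in column 0, so that
the base-change matrices are `I − γ` and `I` with column 0 replaced by these vectors. -/
def levelEquiv (n : ℕ) :
    ∀ i, Fin (stmtR n (i + 1)) ≃ Fin (boundaryRank n (i + 1)) ⊕ Fin (boundaryRank n i)
  | 0 => finSuccEquivSum n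
  | 1 => (finSuccEquivSum n).trans (Equiv.sumComm _ _)
  | 2 => (Equiv.emptySum (Fin 0) (Fin 1)).symm
  | _ + 3 => (Equiv.sumEmpty (Fin 0) (Fin 0)).symm

theorem stmtD_mulVec_boundaryLift (γ : Matrix (Fin (n + 1)) (Fin (n + 1)) K)
    (u w : Fin (n + 1) → K) (i : ℕ) (k : Fin (boundaryRank n i)) :
    stmtD γ u w i *ᵥ boundaryLift i k = boundaryBasis γ u w i k :=
  match i, k with
  | 0, _ => by ext; exact dotProduct_single_one u 0
  | 1, k => mulVec_single_one _ _
  | 2, _ => by ext; simp [stmtD, boundaryLift, boundaryBasis, mulVec, dotProduct]; simp [stmtR]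
  | _ + 3, k => k.elim0

theorem isTorsionOf_stmtD (γ : Matrix (Fin (n + 1)) (Fin (n + 1)) K) {u w : Fin (n + 1) → K}
    (hu0 : u 0 ≠ 0) (hw0 : w 0 ≠ 0) (hdet : ((1 - γ).submatrix Fin.succ Fin.succ).det ≠ 0) :
    IsTorsionOf 4 (stmtR n) (stmtD γ u w)
      (u 0 * w 0 / ((1 - γ).submatrix Fin.succ Fin.succ).det) := by
  refine ⟨boundaryRank n, boundaryBasis γ u w, boundaryLift, levelEquiv n, Equiv.refl _,
    stmtD_mulVec_boundaryLift γ u w, ?_⟩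
  intro detAt
  have h0 : detAt 0 = u 0 := det_fin_one _
  have h1 : detAt 1 = ((1 - γ).submatrix Fin.succ Fin.succ).det := by
    rw [← det_updateCol_zero_single]
    refine congrArg det (Matrix.ext fun (p q : Fin (n + 1)) => ?_)
    cases q using Fin.cases <;> rfl
  have h2 : detAt 2 = w 0 := by
    rw [← det_one_updateCol 0 w]
    refine congrArg det (Matrix.ext fun (p q : Fin (n + 1)) => ?_)
    cases q using Fin.cases with
    | zero => rfl
    | succ k =>
      change (Pi.single k.succ 1 : Fin (n + 1) → K) p =
        (1 : Matrix (Fin (n + 1)) (Fin (n + 1)) K).updateCol 0 w p k.succ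
      rw [updateCol_ne k.succ_ne_zero, one_apply, Pi.single_apply]
  have h3 : detAt 3 = 1 := det_fin_one _
  have h4 : ∀ k, detAt (k + 4) = 1 := fun k =>
    have : IsEmpty (Fin (stmtR n (k + 4))) := inferInstanceAs (IsEmpty (Fin 0))
    det_isEmpty
  refine ⟨fun i => ?_, ?_⟩
  · match i with
    | 0 => exact h0 ▸ hu0.isUnit
    | 1 => exact h1 ▸ hdet.isUnit
    | 2 => exact h2 ▸ hw0.isUnit
    | 3 => exact h3 ▸ isUnit_one
    | k + 4 => exact h4 k ▸ isUnit_one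
  · simp [Finset.prod_range_succ, h0, h1, h2, h3, h4 0, hdet]

end Torsion

/-- Over F = ℚ(t_1,…,t_{n+1}), let γ be a matrix with γw = w and uγ = u
where w_i = 1 − t_i and u_i = (t_1⋯t_i)^{-1}, and rank(I−γ) = n (one less than the
size).  Then the torsion of the acyclic based complex
0 → F →^W F^{n+1} →^{I−γ} F^{n+1} →^q F → 0 equals u_1 w_1 / det((I−γ)(1,1))
(up to sign). -/
theorem stmt18 {n : ℕ}
    (γ : Matrix (Fin (n + 1)) (Fin (n + 1)) (FractionRing (MvPolynomial (Fin (n + 1)) ℚ))) :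
    let F := FractionRing (MvPolynomial (Fin (n + 1)) ℚ)
    let t : Fin (n + 1) → F := fun i =>
      algebraMap (MvPolynomial (Fin (n + 1)) ℚ) F (MvPolynomial.X i)
    let w : Fin (n + 1) → F := fun i => 1 - t i
    let u : Fin (n + 1) → F := fun i => (∏ j ∈ Finset.Iic i, t j)⁻¹
    γ.mulVec w = w → Matrix.vecMul u γ = u → (1 - γ).rank = n →
    (IsTorsionOf 4 (stmtR n) (stmtD γ u w)
        (u 0 * w 0 / ((1 - γ).submatrix Fin.succ Fin.succ).det) ∨
      IsTorsionOf 4 (stmtR n) (stmtD γ u w)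
        (-(u 0 * w 0 / ((1 - γ).submatrix Fin.succ Fin.succ).det))) := by
  intro F t w u hw hu hrank
  have hMw : (1 - γ) *ᵥ w = 0 := by rw [sub_mulVec, one_mulVec, hw, sub_self]
  have huM : u ᵥ* (1 - γ) = 0 := by rw [vecMul_sub, vecMul_one, hu, sub_self]
  have hu0 : u 0 ≠ 0 :=
    inv_ne_zero <| Finset.prod_ne_zero_iff.mpr fun j _ => algebraMap_X_ne_zero j
  have hw0 : w 0 ≠ 0 := sub_ne_zero.mpr (algebraMap_X_ne_one 0).symm
  exact .inl <| isTorsionOf_stmtD γ hu0 hw0 <|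
    det_submatrix_succ_succ_ne_zero hrank hMw huM hu0 hw0
end

section
/- Let F = ℚ(t_1,...,t_n) and let γ ∈ M_n(F) satisfy γw = w for w = (1−t_1,...,1−t_n)^T (with each 1 − t_i ≠ 0) and uγ = u for u = (t_1^{-1},...,(t_1⋯t_n)^{-1}). Let γ̃ be the induced map on F^n/Fw. Then det((I−γ)(1,1))/(1−t_1) · ((t_1⋯t_n)^{-1} − 1) = ± t_1^{-1} det(I − γ̃); i.e. the Alexander function Δ = t_1 det((I−γ)(1,1))/(1−t_1) satisfies Δ = ± det(I − γ̃)/((t_1⋯t_n)^{-1} − 1). -/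
/-!
Write `N = 1 - γ̃`, `w' = (w_2, …, w_{n+1})` and `u' = (u_2, …, u_{n+1})`. The column relation
defining `γ̃` makes the `(1,1)` minor of `1 - γ` the rank-one perturbation `N - w' cᵀ`, and
`u γ = u` turns into `u' N = (u ⬝ w) c`. By the matrix determinant lemma
`(u ⬝ w) det (N - w' cᵀ) = (u ⬝ w - u' ⬝ w') det N = u_1 w_1 det N`; finally `u ⬝ w` telescopes to
`(t_1 ⋯ t_{n+1})⁻¹ - 1` and `u_1 w_1 = t_1⁻¹ (1 - t_1)`.
-/

open Matrix Finset

namespace Matrix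

variable {K m : Type*} [Field K] [Fintype m] [DecidableEq m]

theorem mul_det_sub_replicateCol_mul_replicateRow {N : Matrix m m K} {u c : m → K} {s : K}
    (h : u ᵥ* N = s • c) (w : m → K) :
    s * (N - replicateCol (Fin 1) w * replicateRow (Fin 1) c).det = (s - u ⬝ᵥ w) * N.det := by
  rcases eq_or_ne s 0 with rfl | hs
  · rw [zero_smul] at h
    by_cases hu : u = 0
    · simp [hu]
    · simp [exists_vecMul_eq_zero_iff.mp ⟨u, hu, h⟩]
  have hrank : N - replicateCol (Fin 1) w * replicateRow (Fin 1) c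
      = (1 + replicateCol (Fin 1) (-s⁻¹ • w) * replicateRow (Fin 1) u) * N := by
    rw [add_mul, one_mul, Matrix.mul_assoc, ← replicateRow_vecMul, h, replicateCol_smul,
      replicateRow_smul, Matrix.smul_mul, Matrix.mul_smul, smul_smul, neg_mul,
      inv_mul_cancel₀ hs, neg_smul, one_smul, sub_eq_add_neg]
  rw [hrank, det_mul]
  erw [det_one_add_replicateCol_mul_replicateRow]
  rw [dotProduct_smul, smul_eq_mul]
  field_simp
  ring

end Matrix

theorem sum_inv_prod_Iic_mul_one_sub {K : Type*} [Field K] :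
    ∀ {n : ℕ} (t : Fin (n + 1) → K), (∀ i, t i ≠ 0) →
      ∑ i, (∏ j ∈ Iic i, t j)⁻¹ * (1 - t i) = (∏ i, t i)⁻¹ - 1
  | 0, t, ht => by
    have : Iic (0 : Fin 1) = {0} := rfl
    simp [this, mul_sub, inv_mul_cancel₀ (ht 0)]
  | n + 1, t, ht => by
    rw [Fin.sum_univ_castSucc]
    simp only [Fin.prod_Iic_castSucc]
    have hlast : Iic (Fin.last (n + 1)) = univ := by
      ext; simp [Fin.le_last]
    rw [sum_inv_prod_Iic_mul_one_sub _ fun i => ht _, hlast, Fin.prod_univ_castSucc t, mul_inv,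
      mul_sub, mul_one, mul_assoc, inv_mul_cancel₀ (ht _), mul_one]
    ring

section ReducedMatrix

variable {K : Type*} [Field K] {n : ℕ} {γ : Matrix (Fin (n + 1)) (Fin (n + 1)) K}
  {γt : Matrix (Fin n) (Fin n) K} {w u : Fin (n + 1) → K} {c : Fin n → K}

theorem submatrix_succ_succ_one_sub_eq
    (hcol : ∀ i j, γ i.succ j.succ = c j * w i.succ + γt i j) :
    (1 - γ).submatrix Fin.succ Fin.succ
      = (1 - γt) - replicateCol (Fin 1) (w ∘ Fin.succ) * replicateRow (Fin 1) c := by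
  ext i j
  simp [hcol, one_apply, mul_apply]
  ring

theorem vecMul_one_sub_eq_dotProduct_smul
    (hcol₀ : ∀ j, γ 0 j.succ = c j * w 0)
    (hcol : ∀ i j, γ i.succ j.succ = c j * w i.succ + γt i j) (hu : u ᵥ* γ = u) :
    (u ∘ Fin.succ) ᵥ* (1 - γt) = (u ⬝ᵥ w) • c := by
  ext j
  have h := congrFun hu j.succ
  simp only [vecMul, dotProduct, Fin.sum_univ_succ, hcol₀, hcol, mul_add, sum_add_distrib,
    mul_left_comm _ (c j), ← mul_sum] at h
  rw [vecMul_sub, vecMul_one]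
  simp only [Pi.sub_apply, Pi.smul_apply, smul_eq_mul, vecMul, dotProduct, Fin.sum_univ_succ,
    Function.comp_apply]
  linear_combination -h

theorem dotProduct_mul_det_submatrix_succ_succ
    (hcol₀ : ∀ j, γ 0 j.succ = c j * w 0)
    (hcol : ∀ i j, γ i.succ j.succ = c j * w i.succ + γt i j) (hu : u ᵥ* γ = u) :
    (u ⬝ᵥ w) * ((1 - γ).submatrix Fin.succ Fin.succ).det = u 0 * w 0 * (1 - γt).det := by
  rw [submatrix_succ_succ_one_sub_eq hcol,
    mul_det_sub_replicateCol_mul_replicateRow (vecMul_one_sub_eq_dotProduct_smul hcol₀ hcol hu)]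
  simp only [dotProduct, Fin.sum_univ_succ, Function.comp_apply]
  ring

end ReducedMatrix

/-- Over F = ℚ(t_1,…,t_{n+1}), let γ satisfy γw = w and uγ = u with
w_i = 1 − t_i and u_i = (t_1⋯t_i)^{-1}, and let γ̃ be the matrix of the induced map on
F^{n+1}/(F·w) in the basis of images of e_2,…,e_{n+1}.  Then
det((I−γ)(1,1))/(1−t_1) · ((t_1⋯t_{n+1})^{-1} − 1) = ± t_1^{-1} det(I − γ̃). -/
theorem stmt19 {n : ℕ}
    (γ : Matrix (Fin (n + 1)) (Fin (n + 1)) (FractionRing (MvPolynomial (Fin (n + 1)) ℚ)))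
    (γt : Matrix (Fin n) (Fin n) (FractionRing (MvPolynomial (Fin (n + 1)) ℚ))) :
    let F := FractionRing (MvPolynomial (Fin (n + 1)) ℚ)
    let t : Fin (n + 1) → F := fun i =>
      algebraMap (MvPolynomial (Fin (n + 1)) ℚ) F (MvPolynomial.X i)
    let w : Fin (n + 1) → F := fun i => 1 - t i
    let u : Fin (n + 1) → F := fun i => (∏ j ∈ Finset.Iic i, t j)⁻¹
    γ.mulVec w = w → Matrix.vecMul u γ = u →
    (∀ j : Fin n, ∃ c : F, ∀ i : Fin (n + 1),
      γ i j.succ = c * w i + ∑ k : Fin n, γt k j * (if i = k.succ then (1 : F) else 0)) →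
    (((1 - γ).submatrix Fin.succ Fin.succ).det / (1 - t 0) * ((∏ i, t i)⁻¹ - 1)
        = (t 0)⁻¹ * (1 - γt).det ∨
      ((1 - γ).submatrix Fin.succ Fin.succ).det / (1 - t 0) * ((∏ i, t i)⁻¹ - 1)
        = -((t 0)⁻¹ * (1 - γt).det)) := by
  intro F t w u _ hu hcol
  choose c hc using hcol
  have hinj := IsFractionRing.injective (MvPolynomial (Fin (n + 1)) ℚ) F
  have ht : ∀ i, t i ≠ 0 := fun i => (map_ne_zero_iff _ hinj).mpr (MvPolynomial.X_ne_zero i)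
  have ht₀ : 1 - t 0 ≠ 0 := by
    refine sub_ne_zero.mpr fun h => ?_
    have := congrArg MvPolynomial.constantCoeff (hinj (h.symm.trans (map_one _).symm))
    simp at this
  have key := dotProduct_mul_det_submatrix_succ_succ (γt := γt) (w := w) (c := c)
    (fun j => by simpa [eq_comm (a := (0 : Fin (n + 1)))] using hc j 0)
    (fun i j => by simpa [Fin.succ_inj] using hc j i.succ) hu
  have hu₀ : u 0 = (t 0)⁻¹ := by simp [u, show Iic (0 : Fin (n + 1)) = {0} by ext; simp]
  rw [show u ⬝ᵥ w = (∏ i, t i)⁻¹ - 1 from sum_inv_prod_Iic_mul_one_sub t ht, hu₀] at key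
  left
  field_simp
  linear_combination key
end
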